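/- arXiv:2312.16299 — 3 statements merged into one kernel-verified Lean document; each statement's English description precedes it below -/
import Mathlib

section
/- In the polynomial ring Polynomial (MvPolynomial (Fin n) (ZMod 2)), consider the product over all vectors c : Fin n → ZMod 2 of the linear factors (X + C(∑ i, (MvPolynomial.C (c i)) * (MvPolynomial.X i))), where X is the polynomial variable T and the coefficients are multivariate polynomials over 𝔽₂. Then for every natural number j, the coefficient of T^j in this product is zero unless j = 2^m for some m with 0 ≤ m ≤ n. -/
/-!
Let `P_n = ∏_{c ∈ 𝔽₂ⁿ} (T + L c)` for an additive map `L`. Splitting off the first coordinate,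
`P_{n+1} = P · P(T + a)`, where `P` is the product over the hyperplane `c₀ = 0` and `a = L e₀`.
By induction `P` only has monomials `T^(2^m)`, `m ≤ n`, so in characteristic 2 it is additive:
`P(T + a) = P + P(a)`. Hence `P_{n+1} = P² + P(a) · P`, whose monomials are again `T^(2^m)`,
`m ≤ n + 1`.
-/

open Polynomial

namespace Polynomial

variable {R : Type*} [CommSemiring R]

theorem comp_add_of_support_subset_range_pow (q : ℕ) [ExpChar R q] {p : R[X]}
    (hp : ↑p.support ⊆ Set.range (q ^ ·)) (r s : R[X]) :
    p.comp (r + s) = p.comp r + p.comp s := by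
  simp only [comp_eq_sum_left, Polynomial.sum, ← Finset.sum_add_distrib]
  refine Finset.sum_congr rfl fun k hk => ?_
  obtain ⟨m, rfl⟩ := hp hk
  rw [add_pow_expChar_pow, mul_add]

theorem comp_X_add_C_of_support_subset_range_pow (q : ℕ) [ExpChar R q] {p : R[X]}
    (hp : ↑p.support ⊆ Set.range (q ^ ·)) (a : R) :
    p.comp (X + C a) = p + C (p.eval a) := by
  rw [comp_add_of_support_subset_range_pow q hp, comp_X, comp_C]

theorem support_pow_expChar_subset (q : ℕ) [ExpChar R q] (p : R[X]) :
    ↑(p ^ q).support ⊆ (q * ·) '' ↑p.support := by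
  intro k hk
  rw [← map_frobenius_expand] at hk
  have hk' := mem_support_iff.1 (support_map_subset _ _ hk)
  rw [coeff_expand (expChar_pos R q)] at hk'
  split_ifs at hk' with hdvd
  · exact ⟨k / q, mem_support_iff.2 hk', Nat.mul_div_cancel' hdvd⟩
  · exact absurd rfl hk'

theorem support_prod_X_add_C_subset [CharP R 2] {n : ℕ} (L : (Fin n → ZMod 2) →+ R) :
    ↑(∏ c, (X + C (L c))).support ⊆ (2 ^ ·) '' Set.Iic n := by
  induction n with
  | zero =>
    have : Nontrivial R := CharP.nontrivial_of_char_ne_one (v := 2) (by norm_num)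
    rw [Fintype.prod_subsingleton _ 0, map_zero, map_zero, add_zero, support_X]
    simp
  | succ n ih =>
    set L' := L.comp (Fin.consLinearEquiv (ZMod 2) fun _ => ZMod 2).toAddMonoidHom
    set P := ∏ c, (X + C (L'.comp (AddMonoidHom.inr _ _) c))
    have hP := ih (L'.comp (AddMonoidHom.inr _ _))
    have hsplit : ∏ c, (X + C (L c)) = P * P.comp (X + C (L' (1, 0))) := by
      rw [← (Fin.consLinearEquiv (ZMod 2) fun _ => ZMod 2).toEquiv.prod_comp,
        Fintype.prod_prod_type,
        show ∀ g : ZMod 2 → R[X], ∏ x, g x = g 0 * g 1 from Fin.prod_univ_two, prod_comp]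
      congr 1
      refine Finset.prod_congr rfl fun c _ => ?_
      have hL' : L' (1, c) = L' (1, 0) + L' (0, c) := by
        rw [← map_add, Prod.mk_add_mk, add_zero, zero_add]
      change X + C (L' (1, c)) = _
      rw [add_comp, X_comp, C_comp, hL', map_add, add_assoc]
      rfl
    have hP_additive : ↑P.support ⊆ Set.range (2 ^ ·) := hP.trans (Set.image_subset_range _ _)
    rw [hsplit, comp_X_add_C_of_support_subset_range_pow 2 hP_additive, mul_add, ← sq,
      mul_comm P]
    refine (Finset.coe_subset.2 support_add).trans ?_
    rw [Finset.coe_union]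
    refine Set.union_subset ?_ ?_
    · refine (support_pow_expChar_subset 2 P).trans ?_
      rintro _ ⟨_, hk, rfl⟩
      obtain ⟨m, hm, rfl⟩ := hP hk
      exact ⟨m + 1, Nat.succ_le_succ hm, pow_succ' 2 m⟩
    · refine (Finset.coe_subset.2 (C_mul' _ P ▸ support_smul _ P)).trans (hP.trans ?_)
      exact Set.image_mono (Set.Iic_subset_Iic.2 n.le_succ)

end Polynomial

/-- in the product `∏_{c ∈ 𝔽₂ⁿ} (T + ∑ᵢ cᵢ xᵢ)` (the Dickson/Ore
linearized polynomial) over `𝔽₂[x₁,…,xₙ]`, the coefficient of `T^j` vanishes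
unless `j = 2^m` for some `0 ≤ m ≤ n`. -/
theorem stmt_10 (n : ℕ) (j : ℕ) (h : ∀ m : ℕ, m ≤ n → j ≠ 2 ^ m) :
    (∏ c : Fin n → ZMod 2,
        (Polynomial.X + Polynomial.C
          (∑ i : Fin n, MvPolynomial.C (c i) * MvPolynomial.X i :
            MvPolynomial (Fin n) (ZMod 2)))).coeff j = 0 := by
  have hsupp := support_prod_X_add_C_subset
    (Fintype.linearCombination (ZMod 2)
      (MvPolynomial.X : Fin n → MvPolynomial (Fin n) (ZMod 2))).toAddMonoidHom
  simp only [LinearMap.toAddMonoidHom_coe, Fintype.linearCombination_apply,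
    MvPolynomial.smul_eq_C_mul] at hsupp
  by_contra hj
  obtain ⟨m, hm, rfl⟩ := hsupp (mem_support_iff.2 hj)
  exact h m hm rfl
end

section
/- Let P ∈ MvPolynomial (Fin n) (ZMod 2) be the product over all nonzero vectors c : Fin n → ZMod 2 of the factors (1 + ∑ i, C (c i) * X i), i.e. the product of (1 + α) over all nonzero linear forms α in n variables over 𝔽₂. Then the homogeneous component of P in degree d vanishes for every d with 0 < d < 2^{n−1}. -/
/-!
Let `F(T) = ∏_{c ∈ 𝔽₂ⁿ} (T + α_c)` over all linear forms `α_c = ∑ cᵢ xᵢ`. Splitting off the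
first coordinate gives `F(T) = G(T) · G(T + x₀)`, where `G` is the same product in one variable
fewer. By induction `G` is additive (only the monomials `T ^ 2 ^ i` occur in it), hence
`F = G² + G(x₀) · G` is additive as well.

Since every `α_c` is homogeneous of degree one, the degree-`d` part of `∏_{c ≠ 0} (1 + α_c)` is
the `d`-th elementary symmetric function of the `α_c`, that is, the coefficient of `T ^ (2ⁿ - d)`
in `F = T · ∏_{c ≠ 0} (T + α_c)`. For `0 < d < 2ⁿ⁻¹` the exponent `2ⁿ - d` lies strictly between
`2ⁿ⁻¹` and `2ⁿ`, so it is not a power of two.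
-/

open Finset Polynomial

namespace Polynomial

variable {A : Type*}

/-- A linearized `2`-polynomial: only the monomials `X ^ 2 ^ i` occur. -/
def IsTwoLinearized [Semiring A] (f : A[X]) : Prop :=
  ∀ k, (∀ i, k ≠ 2 ^ i) → f.coeff k = 0

theorem isTwoLinearized_X [Semiring A] : IsTwoLinearized (X : A[X]) := fun k hk => by
  rw [coeff_X, if_neg]
  simpa using (hk 0).symm

namespace IsTwoLinearized

section Semiring

variable [Semiring A] {f g : A[X]}

theorem add (hf : IsTwoLinearized f) (hg : IsTwoLinearized g) : IsTwoLinearized (f + g) :=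
  fun k hk => by simp [hf k hk, hg k hk]

theorem C_mul (hf : IsTwoLinearized f) (a : A) : IsTwoLinearized (C a * f) :=
  fun k hk => by simp [hf k hk]

end Semiring

variable [CommRing A] [CharP A 2] {f : A[X]}

theorem sq (hf : IsTwoLinearized f) : IsTwoLinearized (f ^ 2) := by
  intro k hk
  rw [← map_frobenius_expand, coeff_map, coeff_expand two_pos]
  split_ifs with hdvd
  · obtain ⟨m, rfl⟩ := hdvd
    rw [Nat.mul_div_cancel_left m two_pos, hf m fun i hi => hk (i + 1) (by rw [hi, pow_succ']),
      map_zero]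
  · exact map_zero _

/-- Because `(X + C v) ^ 2 ^ i = X ^ 2 ^ i + C v ^ 2 ^ i` in characteristic `2`. -/
theorem comp_X_add_C (hf : IsTwoLinearized f) (v : A) :
    f.comp (X + C v) = f + C (f.eval v) := by
  conv_lhs => rw [f.as_sum_range]
  have hterm : ∀ k ∈ range (f.natDegree + 1),
      (monomial k (f.coeff k)).comp (X + C v) = C (f.coeff k) * X ^ k + C (f.coeff k * v ^ k) := by
    intro k _
    rw [monomial_comp]
    by_cases hk : ∀ i, k ≠ 2 ^ i
    · simp [hf k hk]
    · obtain ⟨i, rfl⟩ := not_forall_not.mp hk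
      rw [add_pow_char_pow, mul_add, ← C_pow, ← Polynomial.C_mul]
  rw [sum_comp, sum_congr rfl hterm, sum_add_distrib, ← map_sum, ← eval_eq_sum_range]
  congr 1
  conv_rhs => rw [f.as_sum_range]
  exact sum_congr rfl fun k _ => C_mul_X_pow_eq_monomial

theorem mul_comp_X_add_C (hf : IsTwoLinearized f) (v : A) :
    IsTwoLinearized (f * f.comp (X + C v)) := by
  rw [hf.comp_X_add_C, mul_add, ← pow_two, mul_comm]
  exact hf.sq.add (hf.C_mul _)

end IsTwoLinearized

theorem isTwoLinearized_prod_X_add_C_sum_smul [CommRing A] [CharP A 2] [Module (ZMod 2) A]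
    (m : ℕ) (v : Fin m → A) :
    IsTwoLinearized (∏ c : Fin m → ZMod 2, (X + C (∑ i, c i • v i))) := by
  induction m with
  | zero => simpa using isTwoLinearized_X
  | succ m ih =>
    set G := ∏ c : Fin m → ZMod 2, (X + C (∑ i, c i • v i.succ))
    have hsplit : ∏ c : Fin (m + 1) → ZMod 2, (X + C (∑ i, c i • v i)) =
        ∏ a : ZMod 2, ∏ c : Fin m → ZMod 2, (X + C (a • v 0 + ∑ i, c i • v i.succ)) := by
      rw [← Fintype.prod_prod_type', ← Fintype.prod_equiv (Fin.consEquiv fun _ => ZMod 2)]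
      rintro ⟨a, c⟩
      simp [Fin.consEquiv, Fin.sum_univ_succ]
    have hshift : ∏ c : Fin m → ZMod 2, (X + C (v 0 + ∑ i, c i • v i.succ)) =
        G.comp (X + C (v 0)) := by
      simp only [G, prod_comp, add_comp, X_comp, C_comp, C_add, add_assoc]
    rw [hsplit, show (univ : Finset (ZMod 2)) = {0, 1} from rfl, prod_pair zero_ne_one]
    simp only [zero_smul, zero_add, one_smul, hshift]
    exact (ih _).mul_comp_X_add_C _

end Polynomial

theorem MvPolynomial.homogeneousComponent_prod_one_add_eq_coeff {σ R ι : Type*}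
    [CommSemiring R] {f : ι → MvPolynomial σ R} {s : Finset ι}
    (hf : ∀ i ∈ s, (f i).IsHomogeneous 1) {d : ℕ} (hd : d ≤ #s) :
    homogeneousComponent d (∏ i ∈ s, (1 + f i)) =
      (∏ i ∈ s, (Polynomial.X + Polynomial.C (f i))).coeff (#s - d) := by
  classical
  rw [Finset.prod_X_add_C_coeff _ _ (Nat.sub_le _ _), Nat.sub_sub_self hd, prod_one_add, map_sum,
    powersetCard_eq_filter, sum_filter]
  refine sum_congr rfl fun t ht => ?_
  have hhom : (∏ i ∈ t, f i).IsHomogeneous #t := by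
    simpa using IsHomogeneous.prod t f (fun _ => 1) fun i hi => hf i (mem_powerset.1 ht hi)
  rw [homogeneousComponent_of_mem hhom]
  simp [eq_comm]

theorem Nat.ne_two_pow_of_lt_of_lt {k n : ℕ} (h₁ : 2 ^ n < k) (h₂ : k < 2 ^ (n + 1)) (i : ℕ) :
    k ≠ 2 ^ i := by
  rintro rfl
  rw [Nat.pow_lt_pow_iff_right (by norm_num)] at h₁ h₂
  omega

/-- for `P = ∏_{0 ≠ c ∈ 𝔽₂ⁿ} (1 + ∑ᵢ cᵢ xᵢ)`, the product of
`1 + α` over all nonzero linear forms `α` in `n` variables over `𝔽₂`, the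
homogeneous component of `P` of degree `d` vanishes for `0 < d < 2^{n−1}`. -/
theorem stmt_11 (n : ℕ) (d : ℕ) (hd0 : 0 < d) (hd : d < 2 ^ (n - 1)) :
    MvPolynomial.homogeneousComponent d
      (∏ c ∈ Finset.univ.filter (fun c : Fin n → ZMod 2 => c ≠ 0),
        (1 + ∑ i : Fin n, MvPolynomial.C (c i) * MvPolynomial.X i :
          MvPolynomial (Fin n) (ZMod 2))) = 0 := by
  classical
  obtain ⟨m, rfl⟩ : ∃ m, n = m + 1 := ⟨n - 1, by cases n <;> simp_all⟩
  rw [Nat.add_sub_cancel] at hd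
  set L : (Fin (m + 1) → ZMod 2) → MvPolynomial (Fin (m + 1)) (ZMod 2) :=
    fun c => ∑ i, MvPolynomial.C (c i) * MvPolynomial.X i
  have hcard : #(univ.filter fun c : Fin (m + 1) → ZMod 2 => c ≠ 0) = 2 ^ (m + 1) - 1 := by
    rw [filter_ne', card_erase_of_mem (mem_univ _), card_univ, Fintype.card_fun, ZMod.card,
      Fintype.card_fin]
  have hL : ∀ c, (L c).IsHomogeneous 1 := fun c =>
    MvPolynomial.IsHomogeneous.sum _ _ _ fun i _ => by
      simpa using (MvPolynomial.isHomogeneous_C _ (c i)).mul (MvPolynomial.isHomogeneous_X _ i)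
  have hpow : 2 ^ (m + 1) = 2 * 2 ^ m := pow_succ' 2 m
  rw [MvPolynomial.homogeneousComponent_prod_one_add_eq_coeff (fun c _ => hL c) (by omega),
    ← coeff_X_mul, hcard]
  have hF : IsTwoLinearized (∏ c, (X + C (L c))) := by
    simpa [L, MvPolynomial.smul_eq_C_mul] using
      isTwoLinearized_prod_X_add_C_sum_smul (m + 1) (MvPolynomial.X (R := ZMod 2))
  have hX : X * ∏ c ∈ univ.filter (· ≠ 0), (X + C (L c)) = ∏ c, (X + C (L c)) := by
    rw [filter_ne', ← mul_prod_erase univ _ (mem_univ 0)]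
    simp [L]
  rw [hX]
  exact hF _ (Nat.ne_two_pow_of_lt_of_lt (n := m) (by omega) (by omega))
end

section
/- Let P ∈ MvPolynomial (Fin n) (ZMod 2) be the product over all nonzero vectors c : Fin n → ZMod 2 of the factors (1 + ∑ i, C (c i) * X i), i.e. the product of (1 + α) over all nonzero linear forms α in n variables over 𝔽₂. Then the homogeneous component of P² in degree d vanishes for every d with 0 < d ≤ 2^n − 1. -/
/-!
Let `F(X) = ∏_{c ∈ 𝔽₂ⁿ} (X + ℓ_c)`, where `ℓ_c = ∑ cᵢ xᵢ`. Splitting off the first coordinate gives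
`F_{n+1}(X) = G(X) G(X + x₀)` with `G` the renamed `F_n`. If `G = ∑ₖ aₖ X^(2^k)` is linearized, then
`G(X + x₀) = G(X) + G(x₀)` by Frobenius, so `F_{n+1} = G² + G(x₀) G` is linearized again. Giving `X`
degree `1`, everything stays homogeneous, so `F_n = ∑_{k ≤ n} aₖ X^(2^k)` with `aₖ` homogeneous of
degree `2ⁿ - 2ᵏ`. Since `F_n(X) = X ∏_{c ≠ 0} (X + ℓ_c)`, the product in question is `F_n(1) = ∑ aₖ`,
and its square `∑ aₖ²` only has components in degree `0` (from `aₙ = 1`) and in degrees `≥ 2ⁿ`.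
-/

open Polynomial

theorem Fin.prod_univ_pi_succ {n : ℕ} {α M : Type*} [Fintype α] [CommMonoid M]
    (g : (Fin (n + 1) → α) → M) :
    ∏ c, g c = ∏ a, ∏ c : Fin n → α, g (Fin.cons a c) :=
  (Fintype.prod_equiv (Fin.consEquiv fun _ => α) (fun p => g (Fin.cons p.1 p.2)) g
    fun _ => rfl).symm.trans (Fintype.prod_prod_type _)

theorem ZMod.prod_univ_two {M : Type*} [CommMonoid M] (f : ZMod 2 → M) :
    ∏ a, f a = f 0 * f 1 :=
  Fin.prod_univ_two f

section HomogeneousLinearized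

variable (σ K : Type*) [CommRing K]

/-- The `2`-linearized polynomials `∑ₖ aₖ X^(2^k)` over `MvPolynomial σ K` that are homogeneous of
degree `m` when `X` is given degree `1`. -/
noncomputable def homogeneousLinearized (m : ℕ) : AddSubmonoid (MvPolynomial σ K)[X] :=
  AddSubmonoid.closure
    {F | ∃ (k : ℕ) (a : MvPolynomial σ K), 2 ^ k ≤ m ∧ a.IsHomogeneous (m - 2 ^ k) ∧
      F = C a * X ^ 2 ^ k}

variable {σ K}

@[elab_as_elim]
theorem homogeneousLinearized_induction {m : ℕ} {motive : (MvPolynomial σ K)[X] → Prop}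
    (monomial : ∀ (k : ℕ) (a : MvPolynomial σ K), 2 ^ k ≤ m → a.IsHomogeneous (m - 2 ^ k) →
      motive (C a * X ^ 2 ^ k))
    (zero : motive 0) (add : ∀ F G, motive F → motive G → motive (F + G))
    {F : (MvPolynomial σ K)[X]} (hF : F ∈ homogeneousLinearized σ K m) : motive F := by
  induction hF using AddSubmonoid.closure_induction with
  | mem F hF => obtain ⟨k, a, hk, ha, rfl⟩ := hF; exact monomial k a hk ha
  | zero => exact zero
  | add F G _ _ hF hG => exact add F G hF hG

theorem C_mul_X_pow_mem_homogeneousLinearized {m k : ℕ} {a : MvPolynomial σ K}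
    (hk : 2 ^ k ≤ m) (ha : a.IsHomogeneous (m - 2 ^ k)) :
    C a * X ^ 2 ^ k ∈ homogeneousLinearized σ K m :=
  AddSubmonoid.subset_closure ⟨k, a, hk, ha, rfl⟩

theorem C_mul_mem_homogeneousLinearized {m e : ℕ} {s : MvPolynomial σ K}
    {F : (MvPolynomial σ K)[X]} (hs : s.IsHomogeneous e) (hF : F ∈ homogeneousLinearized σ K m) :
    C s * F ∈ homogeneousLinearized σ K (e + m) := by
  refine homogeneousLinearized_induction (fun k a hk ha => ?_) (by simp)
    (fun F G hF hG => by rw [mul_add]; exact add_mem hF hG) hF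
  rw [← mul_assoc, ← C_mul]
  exact C_mul_X_pow_mem_homogeneousLinearized (by omega)
    (by simpa [Nat.add_sub_assoc hk] using hs.mul ha)

theorem map_rename_mem_homogeneousLinearized {τ : Type*} (f : σ → τ) {m : ℕ}
    {F : (MvPolynomial σ K)[X]} (hF : F ∈ homogeneousLinearized σ K m) :
    F.map (MvPolynomial.rename f).toRingHom ∈ homogeneousLinearized τ K m := by
  refine homogeneousLinearized_induction (fun k a hk ha => ?_) (by simp)
    (fun F G hF hG => by rw [Polynomial.map_add]; exact add_mem hF hG) hF
  simpa using C_mul_X_pow_mem_homogeneousLinearized hk ha.rename_isHomogeneous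

theorem isHomogeneous_eval_of_mem_homogeneousLinearized {m : ℕ} {F : (MvPolynomial σ K)[X]}
    (hF : F ∈ homogeneousLinearized σ K m) {x : MvPolynomial σ K} (hx : x.IsHomogeneous 1) :
    (F.eval x).IsHomogeneous m := by
  refine homogeneousLinearized_induction (fun k a hk ha => ?_)
    (by simpa using MvPolynomial.isHomogeneous_zero σ K m)
    (fun F G hF hG => by rw [eval_add]; exact hF.add hG) hF
  simpa [Nat.sub_add_cancel hk] using ha.mul (hx.pow (2 ^ k))

variable [CharP K 2]

theorem sq_mem_homogeneousLinearized {m : ℕ} {F : (MvPolynomial σ K)[X]}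
    (hF : F ∈ homogeneousLinearized σ K m) : F ^ 2 ∈ homogeneousLinearized σ K (2 * m) := by
  refine homogeneousLinearized_induction (fun k a hk ha => ?_) (by simp)
    (fun F G hF hG => by rw [CharTwo.add_sq]; exact add_mem hF hG) hF
  have hdeg : (m - 2 ^ k) * 2 = 2 * m - 2 ^ (k + 1) := by rw [pow_succ]; omega
  rw [mul_pow, ← C_pow, ← pow_mul, ← pow_succ]
  exact C_mul_X_pow_mem_homogeneousLinearized (by rw [pow_succ]; omega) (hdeg ▸ ha.pow 2)

theorem comp_X_add_C_of_mem_homogeneousLinearized {m : ℕ} {F : (MvPolynomial σ K)[X]}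
    (hF : F ∈ homogeneousLinearized σ K m) (x : MvPolynomial σ K) :
    F.comp (X + C x) = F + C (F.eval x) := by
  refine homogeneousLinearized_induction (fun k a hk ha => ?_) (by simp)
    (fun F G hF hG => by rw [add_comp, hF, hG, eval_add, C_add]; ring) hF
  simp [add_pow_char_pow, mul_add]

theorem homogeneousComponent_sq_eval_one_eq_zero {n d : ℕ} {F : (MvPolynomial σ K)[X]}
    (hF : F ∈ homogeneousLinearized σ K (2 ^ n)) (hd0 : 0 < d) (hd : d < 2 ^ n) :
    MvPolynomial.homogeneousComponent d ((F.eval 1) ^ 2) = 0 := by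
  refine homogeneousLinearized_induction (fun k a hk ha => ?_) (by simp)
    (fun F G hF hG => by rw [eval_add, CharTwo.add_sq, map_add, hF, hG, add_zero]) hF
  have hkn : k ≤ n := (Nat.pow_le_pow_iff_right (by norm_num)).mp hk
  have hdeg : d ≠ (2 ^ n - 2 ^ k) * 2 := by
    rcases hkn.eq_or_lt with rfl | hlt
    · simpa using hd0.ne'
    · have : 2 ^ (k + 1) ≤ 2 ^ n := Nat.pow_le_pow_right (by norm_num) hlt
      rw [pow_succ] at this
      omega
  simp only [eval_mul, eval_C, eval_pow, eval_X, one_pow, mul_one]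
  rw [MvPolynomial.homogeneousComponent_of_mem (ha.pow 2), if_neg hdeg]

end HomogeneousLinearized

section LinearForms

noncomputable def linearForm {n : ℕ} (c : Fin n → ZMod 2) : MvPolynomial (Fin n) (ZMod 2) :=
  ∑ i, MvPolynomial.C (c i) * MvPolynomial.X i

noncomputable def linearFormsVanishingPoly (n : ℕ) : (MvPolynomial (Fin n) (ZMod 2))[X] :=
  ∏ c : Fin n → ZMod 2, (X + C (linearForm c))

theorem linearForm_zero (n : ℕ) : linearForm (0 : Fin n → ZMod 2) = 0 := by
  simp [linearForm]

theorem linearForm_cons {n : ℕ} (b : ZMod 2) (c : Fin n → ZMod 2) :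
    linearForm (Fin.cons b c : Fin (n + 1) → ZMod 2) =
      MvPolynomial.C b * MvPolynomial.X 0 + MvPolynomial.rename Fin.succ (linearForm c) := by
  simp [linearForm, Fin.sum_univ_succ]

theorem linearFormsVanishingPoly_succ (n : ℕ) :
    linearFormsVanishingPoly (n + 1) =
      (linearFormsVanishingPoly n).map (MvPolynomial.rename Fin.succ).toRingHom *
        ((linearFormsVanishingPoly n).map (MvPolynomial.rename Fin.succ).toRingHom).comp
          (X + C (MvPolynomial.X 0)) := by
  rw [linearFormsVanishingPoly, Fin.prod_univ_pi_succ, ZMod.prod_univ_two, linearFormsVanishingPoly,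
    Polynomial.map_prod, prod_comp]
  congr 1 <;> refine Finset.prod_congr rfl fun c _ => ?_
  · simp [linearForm_cons]
  · simp [linearForm_cons]
    ring

theorem linearFormsVanishingPoly_mem_homogeneousLinearized (n : ℕ) :
    linearFormsVanishingPoly n ∈ homogeneousLinearized (Fin n) (ZMod 2) (2 ^ n) := by
  induction n with
  | zero =>
    simpa [linearFormsVanishingPoly, linearForm] using
      C_mul_X_pow_mem_homogeneousLinearized (σ := Fin 0) (K := ZMod 2) (k := 0) le_rfl
        (MvPolynomial.isHomogeneous_one _ _)
  | succ n ih =>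
    set G := (linearFormsVanishingPoly n).map (MvPolynomial.rename Fin.succ).toRingHom
    have hG : G ∈ homogeneousLinearized (Fin (n + 1)) (ZMod 2) (2 ^ n) :=
      map_rename_mem_homogeneousLinearized Fin.succ ih
    have hs : (G.eval (MvPolynomial.X 0)).IsHomogeneous (2 ^ n) :=
      isHomogeneous_eval_of_mem_homogeneousLinearized hG (MvPolynomial.isHomogeneous_X _ _)
    rw [linearFormsVanishingPoly_succ, comp_X_add_C_of_mem_homogeneousLinearized hG, mul_add,
      ← sq, mul_comm, pow_succ']
    refine add_mem (sq_mem_homogeneousLinearized hG) ?_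
    rw [two_mul]
    exact C_mul_mem_homogeneousLinearized hs hG

theorem linearFormsVanishingPoly_eval_one (n : ℕ) :
    (linearFormsVanishingPoly n).eval 1 =
      ∏ c ∈ Finset.univ.filter (fun c : Fin n → ZMod 2 => c ≠ 0), (1 + linearForm c) := by
  rw [linearFormsVanishingPoly, eval_prod, Finset.filter_ne',
    ← Finset.mul_prod_erase _ _ (Finset.mem_univ 0)]
  simp [linearForm_zero]

end LinearForms

/-- for `P = ∏_{0 ≠ c ∈ 𝔽₂ⁿ} (1 + ∑ᵢ cᵢ xᵢ)`, the product of
`1 + α` over all nonzero linear forms `α` in `n` variables over `𝔽₂`, the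
homogeneous component of `P²` of degree `d` vanishes for `0 < d ≤ 2^n − 1`. -/
theorem stmt_12 (n : ℕ) (d : ℕ) (hd0 : 0 < d) (hd : d ≤ 2 ^ n - 1) :
    MvPolynomial.homogeneousComponent d
      ((∏ c ∈ Finset.univ.filter (fun c : Fin n → ZMod 2 => c ≠ 0),
        (1 + ∑ i : Fin n, MvPolynomial.C (c i) * MvPolynomial.X i :
          MvPolynomial (Fin n) (ZMod 2))) ^ 2) = 0 := by
  have hd' : d < 2 ^ n := by have := Nat.one_le_two_pow (n := n); omega
  simpa [linearFormsVanishingPoly_eval_one, linearForm] using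
    homogeneousComponent_sq_eval_one_eq_zero (linearFormsVanishingPoly_mem_homogeneousLinearized n)
      hd0 hd'
end
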